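/- Single-qubit QSP characterization: For complex polynomials P, Q there exist unitaries A_0, …, A_n ∈ SU(2) such that A_n W A_{n−1} W ⋯ W A_0 e_0 = (P(z), Q(z))ᵀ for all z on the unit circle, where W = diag(1, z), if and only if (i) deg P, deg Q ≤ n and (ii) |P(z)|² + |Q(z)|² = 1 for every z with |z| = 1. -/

import Mathlib

open Matrix Polynomial

/-- The QSP product `A n * W z * A (n-1) * W z * ⋯ * W z * A 0`. -/
noncomputable def qspProd {d : ℕ} (W : ℂ → Matrix (Fin d) (Fin d) ℂ) :
    (n : ℕ) → (Fin (n + 1) → Matrix (Fin d) (Fin d) ℂ) → ℂ → Matrix (Fin d) (Fin d) ℂ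
  | 0, A, _ => A 0
  | n + 1, A, z => A (Fin.last (n + 1)) * W z * qspProd W n (fun i => A i.castSucc) z

/-!
A QSP product is unitary on the circle, so the image `(P, Q)` of `e₀` has norm one there, and
peeling off the layers one at a time shows that `P` and `Q` are polynomials of degree `≤ n`.

Conversely, on the circle `z ^ N * conj (P z)` is the polynomial `reflect N P̄`, so
`|P|² + |Q|² = 1` becomes the polynomial identity `P * reflect N P̄ + Q * reflect N Q̄ = X ^ N`.
Its coefficient of `X ^ (2 N)` gives `p_N conj p₀ + q_N conj q₀ = 0`, which is exactly the condition
for an `SU(2)` matrix `B` to exist with `B⁻¹ (P, Q) = (S, X T)` and `deg S, deg T < N`. Peeling off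
the layer `B W(z)` lowers the degree, and induction on `N` builds the whole product.
-/

open ComplexConjugate

theorem Complex.setOf_norm_eq_one_infinite : {z : ℂ | ‖z‖ = 1}.Infinite := by
  have hsphere : IsPreconnected (Metric.sphere (0 : ℂ) 1) :=
    isPreconnected_sphere (by simp [Complex.rank_real_complex]) 0 1
  have := hsphere.infinite_of_nontrivial ⟨1, by simp, -1, by simp, by norm_num⟩
  simpa [Metric.sphere] using this

namespace Polynomial

theorem eq_of_eval_eq_on_circle {p q : ℂ[X]} (h : ∀ z : ℂ, ‖z‖ = 1 → p.eval z = q.eval z) :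
    p = q :=
  eq_of_infinite_eval_eq p q (Complex.setOf_norm_eq_one_infinite.mono h)

theorem eval_reflect_map_conj_of_norm_eq_one {N : ℕ} {p : ℂ[X]} (hp : p.natDegree ≤ N) {z : ℂ}
    (hz : ‖z‖ = 1) :
    (reflect N (p.map (starRingEnd ℂ))).eval z = conj (p.eval z) * z ^ N := by
  have hconj : conj z * z = 1 := by rw [← Complex.inv_eq_conj hz, inv_mul_cancel₀ (by aesop)]
  let : Invertible (conj z) := ⟨z, by rw [mul_comm, hconj], hconj⟩
  have h := eval₂_reflect_mul_pow (RingHom.id ℂ) (conj z) N (p.map (starRingEnd ℂ))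
    (natDegree_map_le.trans hp)
  rw [show ⅟(conj z) = z from rfl, eval₂_id, eval₂_id, eval_map_apply] at h
  rw [← h, mul_assoc, ← mul_pow, hconj, one_pow, mul_one]

theorem mul_reflect_add_mul_reflect_eq_X_pow {N : ℕ} {P Q : ℂ[X]} (hP : P.natDegree ≤ N)
    (hQ : Q.natDegree ≤ N) (hPQ : ∀ z : ℂ, ‖z‖ = 1 → ‖P.eval z‖ ^ 2 + ‖Q.eval z‖ ^ 2 = 1) :
    P * reflect N (P.map (starRingEnd ℂ)) + Q * reflect N (Q.map (starRingEnd ℂ)) = X ^ N := by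
  refine eq_of_eval_eq_on_circle fun z hz => ?_
  have hunit : P.eval z * conj (P.eval z) + Q.eval z * conj (Q.eval z) = 1 := by
    simp only [Complex.mul_conj']
    exact_mod_cast hPQ z hz
  simp only [eval_add, eval_mul, eval_reflect_map_conj_of_norm_eq_one hP hz,
    eval_reflect_map_conj_of_norm_eq_one hQ hz, eval_pow, eval_X]
  linear_combination z ^ N * hunit

theorem coeff_mul_conj_coeff_zero_add_eq_zero {N : ℕ} (hN : N ≠ 0) {P Q : ℂ[X]}
    (hP : P.natDegree ≤ N) (hQ : Q.natDegree ≤ N)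
    (hPQ : ∀ z : ℂ, ‖z‖ = 1 → ‖P.eval z‖ ^ 2 + ‖Q.eval z‖ ^ 2 = 1) :
    P.coeff N * conj (P.coeff 0) + Q.coeff N * conj (Q.coeff 0) = 0 := by
  have h := congrArg (coeff · (N + N)) (mul_reflect_add_mul_reflect_eq_X_pow hP hQ hPQ)
  simp only [coeff_add, coeff_X_pow] at h
  rw [coeff_mul_add_eq_of_natDegree_le hP
      (natDegree_reflect_le.trans (max_le le_rfl (natDegree_map_le.trans hP))),
    coeff_mul_add_eq_of_natDegree_le hQ
      (natDegree_reflect_le.trans (max_le le_rfl (natDegree_map_le.trans hQ)))] at h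
  simpa [coeff_reflect, hN] using h

theorem natDegree_C_mul_add_C_mul_X_mul_le {R : Type*} [Semiring R] {n : ℕ} {S T : R[X]}
    (a b : R) (hS : S.natDegree ≤ n) (hT : T.natDegree ≤ n) :
    (C a * S + C b * (X * T)).natDegree ≤ n + 1 := by
  refine (natDegree_add_le _ _).trans (max_le ?_ ?_)
  · exact (natDegree_C_mul_le _ _).trans (hS.trans n.le_succ)
  · refine (natDegree_C_mul_le _ _).trans (natDegree_mul_le.trans ?_)
    have := natDegree_X_le (R := R)
    omega

end Polynomial

namespace Matrix

theorem star_mulVec_dotProduct_mulVec_of_mem_unitaryGroup {n R : Type*} [Fintype n]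
    [DecidableEq n] [CommRing R] [StarRing R] {U : Matrix n n R} (hU : U ∈ unitaryGroup n R)
    (v : n → R) : star (U *ᵥ v) ⬝ᵥ (U *ᵥ v) = star v ⬝ᵥ v := by
  rw [star_mulVec, dotProduct_mulVec, vecMul_vecMul, ← star_eq_conjTranspose,
    mem_unitaryGroup_iff'.mp hU, vecMul_one]

theorem norm_sq_add_norm_sq_mulVec_of_mem_unitaryGroup {U : Matrix (Fin 2) (Fin 2) ℂ}
    (hU : U ∈ unitaryGroup (Fin 2) ℂ) (v : Fin 2 → ℂ) :
    ‖(U *ᵥ v) 0‖ ^ 2 + ‖(U *ᵥ v) 1‖ ^ 2 = ‖v 0‖ ^ 2 + ‖v 1‖ ^ 2 := by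
  have h := star_mulVec_dotProduct_mulVec_of_mem_unitaryGroup hU v
  simp only [dotProduct, Fin.sum_univ_two, Pi.star_apply, Complex.star_def,
    Complex.conj_mul'] at h
  exact_mod_cast h

theorem exists_norm_sq_add_norm_sq_eq_one_mulVec_eq_zero {M : Matrix (Fin 2) (Fin 2) ℂ}
    (hM : M.det = 0) : ∃ a b : ℂ, ‖a‖ ^ 2 + ‖b‖ ^ 2 = 1 ∧ M *ᵥ ![a, b] = 0 := by
  obtain ⟨v, hv0, hv⟩ := exists_mulVec_eq_zero_iff.mpr hM
  have hs : 0 < ‖v 0‖ ^ 2 + ‖v 1‖ ^ 2 := by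
    by_contra! hs
    apply hv0
    ext i
    fin_cases i
    · simpa using (show ‖v 0‖ ^ 2 = 0 by nlinarith [sq_nonneg ‖v 0‖, sq_nonneg ‖v 1‖])
    · simpa using (show ‖v 1‖ ^ 2 = 0 by nlinarith [sq_nonneg ‖v 0‖, sq_nonneg ‖v 1‖])
  set r := √(‖v 0‖ ^ 2 + ‖v 1‖ ^ 2)
  refine ⟨v 0 / r, v 1 / r, ?_, ?_⟩
  · rw [norm_div, norm_div, div_pow, div_pow, ← add_div, Complex.norm_real, Real.norm_eq_abs,
      sq_abs, Real.sq_sqrt hs.le, div_self hs.ne']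
  · have hvec : ![v 0 / r, v 1 / r] = (r : ℂ)⁻¹ • v := by
      ext i
      fin_cases i <;> simp [div_eq_inv_mul]
    rw [hvec, mulVec_smul, hv, smul_zero]

end Matrix

def qspSignal (z : ℂ) : Matrix (Fin 2) (Fin 2) ℂ := diagonal ![1, z]

theorem qspSignal_mem_unitaryGroup {z : ℂ} (hz : ‖z‖ = 1) :
    qspSignal z ∈ unitaryGroup (Fin 2) ℂ := by
  rw [mem_unitaryGroup_iff', qspSignal, star_eq_conjTranspose, diagonal_conjTranspose,
    diagonal_mul_diagonal, ← diagonal_one]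
  congr 1
  ext i
  fin_cases i <;> simp [Complex.conj_mul', hz]

theorem qspSignal_mulVec (z x y : ℂ) : qspSignal z *ᵥ ![x, y] = ![x, z * y] := by
  ext i
  fin_cases i <;> simp [qspSignal]

def su2OfColumn (a b : ℂ) : Matrix (Fin 2) (Fin 2) ℂ := !![a, -conj b; b, conj a]

theorem su2OfColumn_mem_specialUnitaryGroup {a b : ℂ} (hab : ‖a‖ ^ 2 + ‖b‖ ^ 2 = 1) :
    su2OfColumn a b ∈ specialUnitaryGroup (Fin 2) ℂ := by
  have h : a * conj a + b * conj b = 1 := by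
    simp only [Complex.mul_conj']
    exact_mod_cast hab
  rw [mem_specialUnitaryGroup_iff]
  refine ⟨?_, ?_⟩
  · rw [mem_unitaryGroup_iff]
    ext i j
    fin_cases i <;> fin_cases j <;>
      simp [su2OfColumn, mul_apply, Fin.sum_univ_two]
    · linear_combination h
    · ring
    · ring
    · linear_combination h
  · rw [su2OfColumn, det_fin_two_of]
    linear_combination h

section qspProd

variable {d : ℕ} (W : ℂ → Matrix (Fin d) (Fin d) ℂ)

@[simp]
theorem qspProd_snoc {n : ℕ} (A : Fin (n + 1) → Matrix (Fin d) (Fin d) ℂ)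
    (B : Matrix (Fin d) (Fin d) ℂ) (z : ℂ) :
    qspProd W (n + 1) (Fin.snoc A B) z = B * W z * qspProd W n A z := by
  simp [qspProd]

theorem qspProd_mem_unitaryGroup {z : ℂ} (hW : W z ∈ unitaryGroup (Fin d) ℂ) :
    ∀ {n : ℕ} {A : Fin (n + 1) → Matrix (Fin d) (Fin d) ℂ},
      (∀ i, A i ∈ unitaryGroup (Fin d) ℂ) → qspProd W n A z ∈ unitaryGroup (Fin d) ℂ
  | 0, _, hA => hA 0
  | _ + 1, _, hA => mul_mem (mul_mem (hA _) hW) (qspProd_mem_unitaryGroup hW fun _ => hA _)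

end qspProd

theorem mulVec_qspSignal_mulVec_eval (B : Matrix (Fin 2) (Fin 2) ℂ) (S T : ℂ[X]) (z : ℂ) :
    B *ᵥ (qspSignal z *ᵥ ![S.eval z, T.eval z]) =
      ![(C (B 0 0) * S + C (B 0 1) * (X * T)).eval z,
        (C (B 1 0) * S + C (B 1 1) * (X * T)).eval z] := by
  rw [qspSignal_mulVec]
  ext i
  fin_cases i <;> simp [mulVec, dotProduct, Fin.sum_univ_two]

theorem norm_sq_add_norm_sq_eval_C_mul_add_C_mul_X_mul {B : Matrix (Fin 2) (Fin 2) ℂ}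
    (hB : B ∈ unitaryGroup (Fin 2) ℂ) (S T : ℂ[X]) {z : ℂ} (hz : ‖z‖ = 1) :
    ‖(C (B 0 0) * S + C (B 0 1) * (X * T)).eval z‖ ^ 2 +
        ‖(C (B 1 0) * S + C (B 1 1) * (X * T)).eval z‖ ^ 2 =
      ‖S.eval z‖ ^ 2 + ‖T.eval z‖ ^ 2 := by
  have h := norm_sq_add_norm_sq_mulVec_of_mem_unitaryGroup
    (mul_mem hB (qspSignal_mem_unitaryGroup hz)) ![S.eval z, T.eval z]
  rwa [← mulVec_mulVec, mulVec_qspSignal_mulVec_eval] at h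

def QSPAchievable (n : ℕ) (P Q : ℂ[X]) : Prop :=
  ∃ A : Fin (n + 1) → Matrix (Fin 2) (Fin 2) ℂ, (∀ i, A i ∈ specialUnitaryGroup (Fin 2) ℂ) ∧
    ∀ z : ℂ, ‖z‖ = 1 → qspProd qspSignal n A z *ᵥ ![1, 0] = ![P.eval z, Q.eval z]

theorem exists_qspProd_mulVec_eq_eval :
    ∀ {n : ℕ} (A : Fin (n + 1) → Matrix (Fin 2) (Fin 2) ℂ), ∃ P Q : ℂ[X],
      P.natDegree ≤ n ∧ Q.natDegree ≤ n ∧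
        ∀ z : ℂ, qspProd qspSignal n A z *ᵥ ![1, 0] = ![P.eval z, Q.eval z]
  | 0, A => by
    refine ⟨C (A 0 0 0), C (A 0 1 0), by simp, by simp, fun z => ?_⟩
    ext i
    fin_cases i <;> simp [qspProd, mulVec, dotProduct]
  | n + 1, A => by
    obtain ⟨S, T, hS, hT, hST⟩ := exists_qspProd_mulVec_eq_eval (Fin.init A)
    set B := A (Fin.last (n + 1))
    refine ⟨_, _, natDegree_C_mul_add_C_mul_X_mul_le (B 0 0) (B 0 1) hS hT,
      natDegree_C_mul_add_C_mul_X_mul_le (B 1 0) (B 1 1) hS hT, fun z => ?_⟩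
    rw [← Fin.snoc_init_self A, qspProd_snoc, ← mulVec_mulVec, ← mulVec_mulVec, hST,
      mulVec_qspSignal_mulVec_eval]

namespace QSPAchievable

variable {n : ℕ} {P Q : ℂ[X]}

theorem norm_sq_add_norm_sq_eval (h : QSPAchievable n P Q) {z : ℂ} (hz : ‖z‖ = 1) :
    ‖P.eval z‖ ^ 2 + ‖Q.eval z‖ ^ 2 = 1 := by
  obtain ⟨A, hA, hAz⟩ := h
  have hU := qspProd_mem_unitaryGroup qspSignal (qspSignal_mem_unitaryGroup hz)
    (fun i => (hA i).1)
  simpa [hAz z hz] using norm_sq_add_norm_sq_mulVec_of_mem_unitaryGroup hU ![1, 0]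

theorem natDegree_le (h : QSPAchievable n P Q) : P.natDegree ≤ n ∧ Q.natDegree ≤ n := by
  obtain ⟨A, -, hAz⟩ := h
  obtain ⟨P', Q', hP', hQ', hA'⟩ := exists_qspProd_mulVec_eq_eval A
  have hPQ : ∀ z : ℂ, ‖z‖ = 1 → ![P.eval z, Q.eval z] = ![P'.eval z, Q'.eval z] :=
    fun z hz => (hAz z hz).symm.trans (hA' z)
  rw [eq_of_eval_eq_on_circle fun z hz => congrFun (hPQ z hz) 0,
    eq_of_eval_eq_on_circle fun z hz => congrFun (hPQ z hz) 1]
  exact ⟨hP', hQ'⟩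

theorem succ (h : QSPAchievable n P Q) {B : Matrix (Fin 2) (Fin 2) ℂ}
    (hB : B ∈ specialUnitaryGroup (Fin 2) ℂ) :
    QSPAchievable (n + 1) (C (B 0 0) * P + C (B 0 1) * (X * Q))
      (C (B 1 0) * P + C (B 1 1) * (X * Q)) := by
  obtain ⟨A, hA, hAz⟩ := h
  refine ⟨Fin.snoc A B, Fin.lastCases (by simpa using hB) (by simpa using hA), fun z hz => ?_⟩
  rw [qspProd_snoc, ← mulVec_mulVec, ← mulVec_mulVec, hAz z hz, mulVec_qspSignal_mulVec_eval]

end QSPAchievable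

theorem exists_eq_specialUnitary_mul_qspSignal {n : ℕ} {P Q : ℂ[X]} (hP : P.natDegree ≤ n + 1)
    (hQ : Q.natDegree ≤ n + 1)
    (horth : P.coeff (n + 1) * conj (P.coeff 0) + Q.coeff (n + 1) * conj (Q.coeff 0) = 0) :
    ∃ B ∈ specialUnitaryGroup (Fin 2) ℂ, ∃ S T : ℂ[X], S.natDegree ≤ n ∧ T.natDegree ≤ n ∧
      P = C (B 0 0) * S + C (B 0 1) * (X * T) ∧ Q = C (B 1 0) * S + C (B 1 1) * (X * T) := by
  -- The first column `(a, b)` of `B` must make `-b P + a Q` vanish at `0` and kill the top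
  -- coefficient of `conj a P + conj b Q`; the determinant of these two linear conditions is
  -- `conj horth`, so they have a common unit solution.
  obtain ⟨a, b, hab, hker⟩ := exists_norm_sq_add_norm_sq_eq_one_mulVec_eq_zero
    (M := !![Q.coeff 0, -P.coeff 0; conj (P.coeff (n + 1)), conj (Q.coeff (n + 1))])
    (by
      have h := congrArg conj horth
      simp only [map_add, map_mul, Complex.conj_conj, map_zero] at h
      rw [det_fin_two_of]
      linear_combination h)
  have hlin : ∀ c d : ℂ, (C c * P + C d * Q).natDegree ≤ n + 1 := fun c d =>
    (natDegree_add_le _ _).trans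
      (max_le ((natDegree_C_mul_le _ _).trans hP) ((natDegree_C_mul_le _ _).trans hQ))
  set S := C (conj a) * P + C (conj b) * Q
  set T := C (-b) * P + C a * Q
  have hS : S.natDegree ≤ n := by
    have hSN : S.coeff (n + 1) = 0 := by
      simpa [S, mulVec, dotProduct, Fin.sum_univ_two, mul_comm]
        using congrArg conj (congrFun hker 1)
    simpa using natDegree_le_pred (hlin _ _) hSN
  have hXT : X * T.divX = T := by
    have hT0 : T.coeff 0 = 0 := by
      simpa [T, mulVec, dotProduct, Fin.sum_univ_two, mul_comm, add_comm] using congrFun hker 0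
    simpa [hT0] using X_mul_divX_add T
  have hT : T.divX.natDegree ≤ n := by
    rw [natDegree_divX_eq_natDegree_tsub_one]
    have : T.natDegree ≤ n + 1 := hlin (-b) a
    omega
  have hC : C a * C (conj a) + C b * C (conj b) = (1 : ℂ[X]) := by
    have hab' : a * conj a + b * conj b = 1 := by
      simp only [Complex.mul_conj']
      exact_mod_cast hab
    rw [← C_mul, ← C_mul, ← C_add, hab', C_1]
  refine ⟨su2OfColumn a b, su2OfColumn_mem_specialUnitaryGroup hab, S, T.divX, hS, hT, ?_, ?_⟩
  all_goals
    simp only [su2OfColumn, of_apply, cons_val', cons_val_zero, cons_val_one, empty_val',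
      cons_val_fin_one, hXT]
    simp only [S, T, map_neg]
  · linear_combination -P * hC
  · linear_combination -Q * hC

theorem qspAchievable_of_norm_sq_add_norm_sq_eval : ∀ {n : ℕ} {P Q : ℂ[X]},
    P.natDegree ≤ n → Q.natDegree ≤ n →
      (∀ z : ℂ, ‖z‖ = 1 → ‖P.eval z‖ ^ 2 + ‖Q.eval z‖ ^ 2 = 1) → QSPAchievable n P Q
  | 0, P, Q, hP, hQ, hPQ => by
    rw [eq_C_of_natDegree_le_zero hP, eq_C_of_natDegree_le_zero hQ] at hPQ ⊢
    have hab := hPQ 1 (by simp)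
    simp only [eval_C] at hab
    exact ⟨fun _ => su2OfColumn _ _, fun _ => su2OfColumn_mem_specialUnitaryGroup hab,
      fun z _ => by ext i; fin_cases i <;> simp [qspProd, su2OfColumn]⟩
  | n + 1, P, Q, hP, hQ, hPQ => by
    obtain ⟨B, hB, S, T, hS, hT, rfl, rfl⟩ := exists_eq_specialUnitary_mul_qspSignal hP hQ
      (coeff_mul_conj_coeff_zero_add_eq_zero n.succ_ne_zero hP hQ hPQ)
    refine (qspAchievable_of_norm_sq_add_norm_sq_eval hS hT fun z hz => ?_).succ hB
    rw [← norm_sq_add_norm_sq_eval_C_mul_add_C_mul_X_mul hB.1 S T hz]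
    exact hPQ z hz

theorem single_qubit_qsp_analytic (n : ℕ) (P Q : Polynomial ℂ) :
    (∃ A : Fin (n + 1) → Matrix (Fin 2) (Fin 2) ℂ,
        (∀ i, A i ∈ Matrix.unitaryGroup (Fin 2) ℂ ∧ (A i).det = 1) ∧
        (∀ z : ℂ, ‖z‖ = 1 →
          (qspProd (fun z => Matrix.diagonal ![1, z]) n A z).mulVec ![1, 0] =
            ![P.eval z, Q.eval z])) ↔
      (P.natDegree ≤ n ∧ Q.natDegree ≤ n ∧
        ∀ z : ℂ, ‖z‖ = 1 →
          ‖P.eval z‖ ^ 2 + ‖Q.eval z‖ ^ 2 = 1) := by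
  change QSPAchievable n P Q ↔ _
  exact ⟨fun h => ⟨h.natDegree_le.1, h.natDegree_le.2, fun _ => h.norm_sq_add_norm_sq_eval⟩,
    fun ⟨hP, hQ, hPQ⟩ => qspAchievable_of_norm_sq_add_norm_sq_eval hP hQ hPQ⟩
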